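/- Let ρ be a d×d complex positive semidefinite matrix with trace 1, let 0 < α < 1, and let U_1, …, U_N (N ≥ 3) be d×d unitary matrices. Then: ∑_{s=1}^N I^α_ρ(U_s) ≥ (1/(N − 2)) · [ ∑_{1 ≤ s < t ≤ N} I^α_ρ(U_s + U_t) − (1/(N − 1)²) · (∑_{1 ≤ s < t ≤ N} √(I^α_ρ(U_s + U_t)))² ], where √ denotes the real square root. -/

import Mathlib

open Matrix Finset
open scoped ComplexOrder

/-- `ρ^α` via the continuous functional calculus applied to `t ↦ t ^ α`. -/
noncomputable def mpow {d : ℕ} (ρ : Matrix (Fin d) (Fin d) ℂ) (α : ℝ) :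
    Matrix (Fin d) (Fin d) ℂ :=
  cfc (fun t : ℝ => t ^ α) ρ

/-- The Wigner–Yanase–Dyson skew information
`I^α_ρ(K) = −(1/2) Tr([ρ^α, K†] [ρ^{1−α}, K])` of an arbitrary matrix `K`. -/
noncomputable def wyd {d : ℕ} (ρ : Matrix (Fin d) (Fin d) ℂ) (α : ℝ)
    (K : Matrix (Fin d) (Fin d) ℂ) : ℝ :=
  (-(1 / 2 : ℂ) *
    ((mpow ρ α * Kᴴ - Kᴴ * mpow ρ α) * (mpow ρ (1 - α) * K - K * mpow ρ (1 - α))).trace).re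

open scoped InnerProductSpace

/-!
In an eigenbasis of `ρ`, with eigenvalues `λᵢ`, the skew information is a weighted sum of squared
entries, `I^α_ρ(K) = ∑ᵢⱼ cᵢⱼ |K̃ᵢⱼ|²` with `cᵢⱼ = (λᵢ^α - λⱼ^α)(λᵢ^(1-α) - λⱼ^(1-α))/2 ≥ 0`
because both powers are monotone. Hence `I^α_ρ(K) = ‖T K‖²` for an additive map `T` into a
Hilbert space, and the theorem becomes an inequality for the vectors `vₛ = T Uₛ`: the identity
`∑_{s<t} ‖vₛ + vₜ‖² = (N - 2) ∑ₛ ‖vₛ‖² + ‖∑ₛ vₛ‖²` together with the triangle inequality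
`(N - 1) ‖∑ₛ vₛ‖ = ‖∑_{s<t} (vₛ + vₜ)‖ ≤ ∑_{s<t} ‖vₛ + vₜ‖`.
-/

section PairwiseSums
variable {ι : Type*} [Fintype ι] [LinearOrder ι]

theorem sum_filter_lt_add_swap {M : Type*} [AddCommGroup M] (f : ι → ι → M) :
    ∑ p ∈ univ.filter (fun p : ι × ι => p.1 < p.2), (f p.1 p.2 + f p.2 p.1) =
      ∑ s, ∑ t, f s t - ∑ s, f s s := by
  have hswap : ∑ p ∈ univ.filter (fun p : ι × ι => p.1 < p.2), f p.2 p.1 =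
      ∑ p ∈ univ.filter (fun p : ι × ι => p.2 < p.1), f p.1 p.2 :=
    sum_equiv (Equiv.prodComm _ _) (by simp) (fun _ _ => rfl)
  have hdiag : ∑ p ∈ univ.filter (fun p : ι × ι => p.1 = p.2), f p.1 p.2 = ∑ s, f s s :=
    sum_nbij' Prod.fst (fun s => (s, s)) (by simp) (by simp) (by simp +contextual [Prod.ext_iff])
      (by simp) (by simp +contextual)
  have hsplit : ∀ p : ι × ι, f p.1 p.2 = (if p.1 < p.2 then f p.1 p.2 else 0) +
      (if p.2 < p.1 then f p.1 p.2 else 0) + (if p.1 = p.2 then f p.1 p.2 else 0) := by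
    rintro ⟨s, t⟩
    rcases lt_trichotomy s t with h | rfl | h
    · simp [h, h.ne, h.not_gt]
    · simp
    · simp [h, h.ne', h.not_gt]
  rw [← Fintype.sum_prod_type', Fintype.sum_congr _ _ hsplit]
  simp only [sum_add_distrib, ← sum_filter, hdiag, hswap]
  abel

theorem sum_filter_lt_add {M : Type*} [AddCommGroup M] (v : ι → M) :
    ∑ p ∈ univ.filter (fun p : ι × ι => p.1 < p.2), (v p.1 + v p.2) =
      Fintype.card ι • ∑ s, v s - ∑ s, v s := by
  rw [sum_filter_lt_add_swap (fun s _ => v s)]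
  simp [smul_sum]

variable {E : Type*} [NormedAddCommGroup E] (v : ι → E)

theorem sum_filter_lt_norm_add_sq (𝕜 : Type*) [RCLike 𝕜] [InnerProductSpace 𝕜 E] :
    ∑ p ∈ univ.filter (fun p : ι × ι => p.1 < p.2), ‖v p.1 + v p.2‖ ^ 2 =
      ((Fintype.card ι : ℝ) - 2) * ∑ s, ‖v s‖ ^ 2 + ‖∑ s, v s‖ ^ 2 := by
  have hpolar : ∀ s t, ‖v s + v t‖ ^ 2 = (‖v s‖ ^ 2 + RCLike.re ⟪v s, v t⟫_𝕜) +
      (‖v t‖ ^ 2 + RCLike.re ⟪v t, v s⟫_𝕜) := fun s t => by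
    rw [norm_add_sq (𝕜 := 𝕜), ← inner_re_symm (𝕜 := 𝕜) (v s)]
    ring
  have hnorm : ‖∑ s, v s‖ ^ 2 = ∑ s, ∑ t, RCLike.re ⟪v s, v t⟫_𝕜 := by
    simp only [← inner_self_eq_norm_sq (𝕜 := 𝕜), sum_inner, inner_sum, map_sum]
    exact sum_comm
  simp_rw [hpolar]
  rw [sum_filter_lt_add_swap (fun s t => ‖v s‖ ^ 2 + RCLike.re ⟪v s, v t⟫_𝕜)]
  simp only [sum_add_distrib, sum_const, card_univ, nsmul_eq_mul, ← mul_sum, ← hnorm,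
    inner_self_eq_norm_sq]
  ring

theorem card_sub_one_mul_norm_sum_le (𝕜 : Type*) [RCLike 𝕜] [NormedSpace 𝕜 E] :
    ((Fintype.card ι : ℝ) - 1) * ‖∑ s, v s‖ ≤
      ∑ p ∈ univ.filter (fun p : ι × ι => p.1 < p.2), ‖v p.1 + v p.2‖ :=
  calc ((Fintype.card ι : ℝ) - 1) * ‖∑ s, v s‖
      = ‖Fintype.card ι • ∑ s, v s‖ - ‖∑ s, v s‖ := by
        rw [RCLike.norm_nsmul 𝕜, nsmul_eq_mul]; ring
    _ ≤ ‖Fintype.card ι • ∑ s, v s - ∑ s, v s‖ := norm_sub_norm_le _ _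
    _ = ‖∑ p ∈ univ.filter (fun p : ι × ι => p.1 < p.2), (v p.1 + v p.2)‖ := by
      rw [sum_filter_lt_add]
    _ ≤ _ := norm_sum_le _ _

theorem sum_norm_sq_ge_pairwise (𝕜 : Type*) [RCLike 𝕜] [InnerProductSpace 𝕜 E]
    (hn : 3 ≤ Fintype.card ι) :
    ∑ s, ‖v s‖ ^ 2 ≥
      (1 / ((Fintype.card ι : ℝ) - 2)) *
        ((∑ p ∈ univ.filter (fun p : ι × ι => p.1 < p.2), ‖v p.1 + v p.2‖ ^ 2) -
          (1 / ((Fintype.card ι : ℝ) - 1) ^ 2) *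
            (∑ p ∈ univ.filter (fun p : ι × ι => p.1 < p.2), ‖v p.1 + v p.2‖) ^ 2) := by
  have hn' : (3 : ℝ) ≤ Fintype.card ι := by exact_mod_cast hn
  have hbound : ‖∑ s, v s‖ ^ 2 ≤ 1 / ((Fintype.card ι : ℝ) - 1) ^ 2 *
      (∑ p ∈ univ.filter (fun p : ι × ι => p.1 < p.2), ‖v p.1 + v p.2‖) ^ 2 := by
    rw [one_div_mul_eq_div, le_div_iff₀ (by nlinarith), ← mul_pow, mul_comm]
    exact pow_le_pow_left₀ (mul_nonneg (by linarith) (norm_nonneg _))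
      (card_sub_one_mul_norm_sum_le v 𝕜) 2
  rw [ge_iff_le, one_div_mul_eq_div, div_le_iff₀ (by linarith), sum_filter_lt_norm_add_sq v 𝕜]
  linarith

end PairwiseSums

section Commutators
variable {n : Type*} [Fintype n] [DecidableEq n]

theorem trace_commutator_mul_commutator_conj (u : unitary (Matrix n n ℂ))
    (A B M : Matrix n n ℂ) :
    letI φ := Unitary.conjStarAlgAut ℂ (Matrix n n ℂ) u
    ((φ A * (φ M)ᴴ - (φ M)ᴴ * φ A) * (φ B * φ M - φ M * φ B)).trace =
      ((A * Mᴴ - Mᴴ * A) * (B * M - M * B)).trace := by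
  simp only [← star_eq_conjTranspose, ← map_star, ← map_mul, ← map_sub]
  rw [Unitary.conjStarAlgAut_apply, trace_mul_cycle, ← Matrix.mul_assoc,
    Unitary.coe_star_mul_self, Matrix.one_mul]

theorem re_trace_commutator_mul_commutator_diagonal (a b : n → ℝ) (M : Matrix n n ℂ) :
    (-(1 / 2 : ℂ) * ((diagonal (fun i => (a i : ℂ)) * Mᴴ - Mᴴ * diagonal (fun i => (a i : ℂ))) *
      (diagonal (fun i => (b i : ℂ)) * M - M * diagonal (fun i => (b i : ℂ)))).trace).re =
      ∑ i, ∑ j, (a i - a j) * (b i - b j) / 2 * ‖M i j‖ ^ 2 := by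
  rw [trace, mul_sum, Complex.re_sum, sum_comm]
  refine sum_congr rfl fun i _ => ?_
  rw [diag_apply, mul_apply, mul_sum, Complex.re_sum]
  refine sum_congr rfl fun j _ => ?_
  simp only [Matrix.sub_apply, diagonal_mul, mul_diagonal, conjTranspose_apply, RCLike.star_def]
  have hnorm : (starRingEnd ℂ) (M j i) * M j i = (‖M j i‖ : ℂ) ^ 2 := by
    rw [mul_comm, Complex.mul_conj']
  rw [← Complex.ofReal_re ((a j - a i) * (b j - b i) / 2 * ‖M j i‖ ^ 2)]
  congr 1
  push_cast
  linear_combination (-(1 / 2 : ℂ) * (a i - a j) * (b j - b i)) * hnorm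

end Commutators

theorem rpow_sub_rpow_mul_rpow_one_sub_sub_nonneg {x y α : ℝ} (hx : 0 ≤ x) (hy : 0 ≤ y)
    (hα0 : 0 ≤ α) (hα1 : α ≤ 1) : 0 ≤ (x ^ α - y ^ α) * (x ^ (1 - α) - y ^ (1 - α)) :=
  ((Real.monotoneOn_rpow_Ici_of_exponent_nonneg hα0).monovaryOn
    (Real.monotoneOn_rpow_Ici_of_exponent_nonneg (sub_nonneg.2 hα1))).sub_mul_sub_nonneg hy hx

section WignerYanaseDyson
variable {d : ℕ} {ρ : Matrix (Fin d) (Fin d) ℂ}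

theorem mpow_eq_conj_diagonal (hρ : ρ.IsHermitian) (α : ℝ) :
    mpow ρ α = Unitary.conjStarAlgAut ℂ _ hρ.eigenvectorUnitary
      (diagonal fun i => ((hρ.eigenvalues i ^ α : ℝ) : ℂ)) := by
  rw [mpow, hρ.cfc_eq]
  rfl

theorem wyd_eq_sum_eigenbasis (hρ : ρ.IsHermitian) (α : ℝ) (K : Matrix (Fin d) (Fin d) ℂ) :
    wyd ρ α K = ∑ i, ∑ j,
      (hρ.eigenvalues i ^ α - hρ.eigenvalues j ^ α) *
        (hρ.eigenvalues i ^ (1 - α) - hρ.eigenvalues j ^ (1 - α)) / 2 *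
        ‖(Unitary.conjStarAlgAut ℂ _ hρ.eigenvectorUnitary).symm K i j‖ ^ 2 := by
  rw [wyd, mpow_eq_conj_diagonal hρ, mpow_eq_conj_diagonal hρ,
    ← (Unitary.conjStarAlgAut ℂ _ hρ.eigenvectorUnitary).apply_symm_apply K,
    trace_commutator_mul_commutator_conj, re_trace_commutator_mul_commutator_diagonal,
    StarAlgEquiv.symm_apply_apply]

theorem exists_addMonoidHom_wyd_eq_norm_sq (hρ : ρ.PosSemidef) {α : ℝ} (hα0 : 0 ≤ α)
    (hα1 : α ≤ 1) :
    ∃ T : Matrix (Fin d) (Fin d) ℂ →+ EuclideanSpace ℂ (Fin d × Fin d),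
      ∀ K, wyd ρ α K = ‖T K‖ ^ 2 := by
  set φ := Unitary.conjStarAlgAut ℂ _ hρ.1.eigenvectorUnitary
  set c : Fin d × Fin d → ℝ := fun p =>
    (hρ.1.eigenvalues p.1 ^ α - hρ.1.eigenvalues p.2 ^ α) *
      (hρ.1.eigenvalues p.1 ^ (1 - α) - hρ.1.eigenvalues p.2 ^ (1 - α)) / 2
  have hc : ∀ p, 0 ≤ c p := fun p => div_nonneg (rpow_sub_rpow_mul_rpow_one_sub_sub_nonneg
    (hρ.eigenvalues_nonneg _) (hρ.eigenvalues_nonneg _) hα0 hα1) zero_le_two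
  refine ⟨{ toFun := fun K => WithLp.toLp 2 fun p => (√(c p) : ℂ) * φ.symm K p.1 p.2
            map_zero' := by ext; simp
            map_add' := fun K L => by ext; simp [mul_add] }, fun K => ?_⟩
  rw [wyd_eq_sum_eigenbasis hρ.1, EuclideanSpace.norm_sq_eq, Fintype.sum_prod_type]
  refine sum_congr rfl fun i _ => sum_congr rfl fun j _ => ?_
  change _ = ‖(√(c (i, j)) : ℂ) * φ.symm K i j‖ ^ 2
  rw [norm_mul, mul_pow, Complex.norm_real, Real.norm_eq_abs, sq_abs,
    Real.sq_sqrt (hc _)]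

end WignerYanaseDyson

theorem unitary_uncertainty_Lb1_general (d N : ℕ) (hN : 3 ≤ N)
    (ρ : Matrix (Fin d) (Fin d) ℂ) (hρ : ρ.PosSemidef)
    (α : ℝ) (hα0 : 0 < α) (hα1 : α < 1)
    (U : Fin N → Matrix (Fin d) (Fin d) ℂ) :
    ∑ s, wyd ρ α (U s) ≥
      (1 / ((N : ℝ) - 2)) *
        ((∑ p ∈ univ.filter (fun p : Fin N × Fin N => p.1 < p.2),
            wyd ρ α (U p.1 + U p.2)) -
          (1 / ((N : ℝ) - 1) ^ 2) *
            (∑ p ∈ univ.filter (fun p : Fin N × Fin N => p.1 < p.2),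
              Real.sqrt (wyd ρ α (U p.1 + U p.2))) ^ 2) := by
  obtain ⟨T, hT⟩ := exists_addMonoidHom_wyd_eq_norm_sq hρ hα0.le hα1.le
  have h := sum_norm_sq_ge_pairwise (fun s => T (U s)) ℂ (by simpa using hN)
  rw [Fintype.card_fin] at h
  simpa only [hT, map_add, Real.sqrt_sq (norm_nonneg _)] using h

theorem unitary_uncertainty_Lb1 (d N : ℕ) (hN : 3 ≤ N)
    (ρ : Matrix (Fin d) (Fin d) ℂ) (hρ : ρ.PosSemidef) (hTr : ρ.trace = 1)
    (α : ℝ) (hα0 : 0 < α) (hα1 : α < 1)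
    (U : Fin N → Matrix (Fin d) (Fin d) ℂ)
    (hU : ∀ s, U s ∈ Matrix.unitaryGroup (Fin d) ℂ) :
    ∑ s, wyd ρ α (U s) ≥
      (1 / ((N : ℝ) - 2)) *
        ((∑ p ∈ univ.filter (fun p : Fin N × Fin N => p.1 < p.2),
            wyd ρ α (U p.1 + U p.2)) -
          (1 / ((N : ℝ) - 1) ^ 2) *
            (∑ p ∈ univ.filter (fun p : Fin N × Fin N => p.1 < p.2),
              Real.sqrt (wyd ρ α (U p.1 + U p.2))) ^ 2) :=
  unitary_uncertainty_Lb1_general d N hN ρ hρ α hα0 hα1 U
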